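/- Let G be a minimal graph with Δ(G) ≤ k−1, k ≥ 11, having no nice k-coloring, containing two 3-vertices u, v with common neighborhood {x, y, z} where xy ∈ E(G). Let ψ be a nice k-coloring of G − {u,v} with missing-color sets C_x = {1,2}, ψ(xy) = 3, and 1 ∈ C_x ∩ C_y ∩ C_z. Then either C_z = {1,3} or C_x = C_y = C_z = {1,2}. -/

import Mathlib

open SimpleGraph

/-- The degree of a vertex `v` in a graph `G` (number of neighbors). -/
noncomputable def deg {V : Type*} (G : SimpleGraph V) (v : V) : ℕ :=
  (G.neighborSet v).ncard

/-- The maximum degree `Δ(G)` of a finite graph. -/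
noncomputable def maxDeg {V : Type*} [Fintype V] (G : SimpleGraph V) : ℕ :=
  Finset.univ.sup (deg G)

/-- A total `k`-coloring of `G`: a coloring of vertices (`cv`) and edges (`ce`) with `k`
colors such that no two adjacent vertices, no two incident edges, and no vertex and
incident edge receive the same color. -/
def IsTotalColoring {V : Type*} (G : SimpleGraph V) (k : ℕ)
    (cv : V → Fin k) (ce : Sym2 V → Fin k) : Prop :=
  (∀ u v, G.Adj u v → cv u ≠ cv v) ∧
  (∀ u v w, G.Adj u v → G.Adj u w → v ≠ w → ce s(u, v) ≠ ce s(u, w)) ∧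
  (∀ u v, G.Adj u v → cv u ≠ ce s(u, v))

def HasTotalColoring {V : Type*} (G : SimpleGraph V) (k : ℕ) : Prop :=
  ∃ cv ce, IsTotalColoring G k cv ce

/-- The total chromatic number `χ''(G)`: the least `k` admitting a total `k`-coloring. -/
noncomputable def totalChromaticNumber {V : Type*} (G : SimpleGraph V) : ℕ :=
  sInf {k | HasTotalColoring G k}

/-- `H` is a minor of `G`: there are pairwise disjoint nonempty connected branch sets in `G`,
one for each vertex of `H`, with an edge of `G` between the branch sets of any two
vertices adjacent in `H`. -/
def HasMinor {V W : Type*} (G : SimpleGraph V) (H : SimpleGraph W) : Prop :=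
  ∃ φ : W → Set V,
    (∀ w, (G.induce (φ w)).Connected) ∧
    (∀ w₁ w₂, w₁ ≠ w₂ → Disjoint (φ w₁) (φ w₂)) ∧
    (∀ w₁ w₂, H.Adj w₁ w₂ → ∃ u ∈ φ w₁, ∃ v ∈ φ w₂, G.Adj u v)

abbrev K5 : SimpleGraph (Fin 5) := ⊤

abbrev K33 : SimpleGraph (Fin 3 ⊕ Fin 3) := completeBipartiteGraph (Fin 3) (Fin 3)

/-- A nice `k`-coloring: a proper coloring of all edges and of all vertices of degree at
least `6`, such that no two adjacent or incident colored elements share a color. -/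
def IsNiceColoring {V : Type*} (G : SimpleGraph V) (k : ℕ)
    (cv : V → Fin k) (ce : Sym2 V → Fin k) : Prop :=
  (∀ u v, G.Adj u v → 6 ≤ deg G u → 6 ≤ deg G v → cv u ≠ cv v) ∧
  (∀ u v w, G.Adj u v → G.Adj u w → v ≠ w → ce s(u, v) ≠ ce s(u, w)) ∧
  (∀ u v, G.Adj u v → 6 ≤ deg G u → cv u ≠ ce s(u, v))

def HasNiceColoring {V : Type*} (G : SimpleGraph V) (k : ℕ) : Prop :=
  ∃ cv ce, IsNiceColoring G k cv ce

/-- A color `c` is missing at `v` if it is used neither on `v` (when `v` is colored,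
i.e. has degree at least 6) nor on any edge incident with `v`. -/
def MissingAt {V : Type*} {k : ℕ} (G : SimpleGraph V)
    (cv : V → Fin k) (ce : Sym2 V → Fin k) (v : V) (c : Fin k) : Prop :=
  (6 ≤ deg G v → cv v ≠ c) ∧ ∀ w, G.Adj v w → ce s(v, w) ≠ c

/-- `G` is planar: it has a drawing in the plane with injective vertex placement and
edges drawn as arcs whose interiors are pairwise disjoint and avoid all vertex points. -/
def IsPlanar {V : Type*} (G : SimpleGraph V) : Prop :=
  ∃ (p : V → ℝ × ℝ) (γ : G.edgeSet → ℝ → ℝ × ℝ),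
    Function.Injective p ∧
    (∀ e, ContinuousOn (γ e) (Set.Icc 0 1)) ∧
    (∀ e, Set.InjOn (γ e) (Set.Icc 0 1)) ∧
    (∀ e : G.edgeSet, ∀ u v : V, (e : Sym2 V) = s(u, v) →
      ({γ e 0, γ e 1} : Set (ℝ × ℝ)) = {p u, p v}) ∧
    (∀ e : G.edgeSet, ∀ w : V, ∀ t ∈ Set.Ioo (0 : ℝ) 1, γ e t ≠ p w) ∧
    (∀ e₁ e₂ : G.edgeSet, e₁ ≠ e₂ → ∀ s ∈ Set.Ioo (0 : ℝ) 1, ∀ t ∈ Set.Ioo (0 : ℝ) 1,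
      γ e₁ s ≠ γ e₂ t)

/-- A planar triangulation, i.e. an edge-maximal planar graph. -/
def IsPlanarTriangulation {W : Type*} (H : SimpleGraph W) : Prop :=
  IsPlanar H ∧ ∀ H' : SimpleGraph W, H < H' → ¬ IsPlanar H'

/-- The Wagner graph `V₈`: the 8-cycle together with its four main diagonals. -/
def wagnerGraph : SimpleGraph (ZMod 8) :=
  SimpleGraph.fromRel (fun i j => j = i + 1 ∨ j = i + 4)

/-!
Delete the edges at `u` and `v` and recolour `xy` with `c₁`: now `c₁` is missing at `z` but at
neither `x` nor `y`. The vertices that have degree at least `6` in `G` but not in `G - u - v` lie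
among `x, y, z` and have at most five neighbours, so they can be coloured greedily as `k ≥ 11`.
Afterwards every missing set at `x, y, z` has at least two colours (at least five at a newly
coloured vertex). Two systems of distinct representatives of these three sets, differing in every
coordinate, would colour the edges at `u` and at `v` and give a nice colouring of `G`. A short
case analysis shows that they fail to exist only if the missing sets at `x` and `y` have two
colours and every colour missing at `z` other than `c₁` is missing at both `x` and `y`. Since
the missing set at `x` is then `{c₂, c₃}`, this is the claimed dichotomy.
-/

open Finset

namespace Finset

variable {α : Type*} [DecidableEq α]

lemma exists_mem_ne_ne (s : Finset α) (h : 2 < #s) (p q : α) : ∃ a ∈ s, a ≠ p ∧ a ≠ q := by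
  obtain ⟨a, ha, hpq⟩ :=
    exists_mem_notMem_of_card_lt_card ((card_le_two (a := p) (b := q)).trans_lt h)
  simp only [mem_insert, mem_singleton, not_or] at hpq
  exact ⟨a, ha, hpq⟩

lemma exists_mem_ne_ne_ne (s : Finset α) (h : 3 < #s) (p q r : α) :
    ∃ a ∈ s, a ≠ p ∧ a ≠ q ∧ a ≠ r := by
  obtain ⟨a, ha, hpqr⟩ :=
    exists_mem_notMem_of_card_lt_card ((card_le_three (a := p) (b := q) (c := r)).trans_lt h)
  simp only [mem_insert, mem_singleton, not_or] at hpqr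
  exact ⟨a, ha, hpqr⟩

lemma exists_pair_ne_left_ne_right (s : Finset α) (h : 1 < #s) {p q : α} (hpq : p ≠ q) :
    ∃ a ∈ s, ∃ b ∈ s, a ≠ b ∧ a ≠ p ∧ b ≠ q := by
  obtain ⟨a, ha, b, hb, hab⟩ := one_lt_card.mp h
  by_cases hswap : a = p ∨ b = q
  · refine ⟨b, hb, a, ha, hab.symm, ?_, ?_⟩ <;> rcases hswap with rfl | rfl <;> tauto
  · push Not at hswap
    exact ⟨a, ha, b, hb, hab, hswap⟩

lemma eq_pair_of_card_eq_two {s : Finset α} (h : #s = 2) {a b : α} (ha : a ∈ s) (hb : b ∈ s)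
    (hab : a ≠ b) : s = {a, b} :=
  (eq_of_subset_of_card_le (insert_subset ha (singleton_subset_iff.mpr hb))
    (by rw [h, card_pair hab])).symm

lemma exists_eq_pair_of_card_eq_two {s : Finset α} (h : #s = 2) {a : α} (ha : a ∈ s) :
    ∃ b, b ≠ a ∧ s = {a, b} := by
  obtain ⟨b, hb, hba⟩ := s.exists_mem_ne (by omega) a
  exact ⟨b, hba, eq_pair_of_card_eq_two h ha hb hba.symm⟩

lemma mem_and_card_eq_two_of_card_erase_le_one {s : Finset α} (hs : 1 < #s) {a : α}
    (ha : #(s.erase a) ≤ 1) : a ∈ s ∧ #s = 2 := by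
  by_cases h : a ∈ s
  · rw [card_erase_of_mem h] at ha
    exact ⟨h, by omega⟩
  · rw [erase_eq_of_notMem h] at ha
    omega

end Finset

section Transversals

variable {α : Type*}

/-- Two systems of distinct representatives of `(A, B, C)` that differ in every coordinate, i.e.
a proper edge colouring of `K_{2,3}` from the lists `A, B, C` at the vertices of the side of
size three. -/
def HasTwoTransversals (A B C : Finset α) : Prop :=
  ∃ a₁ ∈ A, ∃ a₂ ∈ B, ∃ a₃ ∈ C, ∃ b₁ ∈ A, ∃ b₂ ∈ B, ∃ b₃ ∈ C,
    a₁ ≠ a₂ ∧ a₁ ≠ a₃ ∧ a₂ ≠ a₃ ∧ b₁ ≠ b₂ ∧ b₁ ≠ b₃ ∧ b₂ ≠ b₃ ∧ a₁ ≠ b₁ ∧ a₂ ≠ b₂ ∧ a₃ ≠ b₃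

lemma HasTwoTransversals.swap {A B C : Finset α} :
    HasTwoTransversals A B C → HasTwoTransversals B A C := by
  rintro ⟨a₁, ha₁, a₂, ha₂, a₃, ha₃, b₁, hb₁, b₂, hb₂, b₃, hb₃, h₁₂, h₁₃, h₂₃, h₁₂', h₁₃', h₂₃',
    h₁, h₂, h₃⟩
  exact ⟨a₂, ha₂, a₁, ha₁, a₃, ha₃, b₂, hb₂, b₁, hb₁, b₃, hb₃, h₁₂.symm, h₂₃, h₁₃, h₁₂'.symm,
    h₂₃', h₁₃', h₂, h₁, h₃⟩

variable [DecidableEq α]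

lemma hasTwoTransversals_of_three_lt_card {A B C : Finset α} (hA : 1 < #A) (hB : 1 < #B)
    (hC : 3 < #C) : HasTwoTransversals A B C := by
  obtain ⟨a₁, ha₁, b₁, hb₁, h₁⟩ := one_lt_card.mp hA
  obtain ⟨a₂, ha₂, b₂, hb₂, h₂, h₁₂, h₁₂'⟩ := B.exists_pair_ne_left_ne_right hB h₁
  obtain ⟨a₃, ha₃, h₁₃, h₂₃⟩ := C.exists_mem_ne_ne (by omega) a₁ a₂
  obtain ⟨b₃, hb₃, h₁₃', h₂₃', h₃⟩ := C.exists_mem_ne_ne_ne hC b₁ b₂ a₃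
  exact ⟨a₁, ha₁, a₂, ha₂, a₃, ha₃, b₁, hb₁, b₂, hb₂, b₃, hb₃, h₁₂.symm, h₁₃.symm, h₂₃.symm,
    h₁₂'.symm, h₁₃'.symm, h₂₃'.symm, h₁, h₂, h₃.symm⟩

/-- The first transversal ends in `c`, the second in `e`. -/
lemma hasTwoTransversals_of_one_lt_card_erase {A B C : Finset α} {c e : α} (hcC : c ∈ C)
    (hcA : c ∉ A) (hcB : c ∉ B) (heC : e ∈ C) (hec : e ≠ c) (hA : 1 < #A)
    (hB : 1 < #(B.erase e)) : HasTwoTransversals A B C := by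
  obtain ⟨b₁, hb₁, hb₁e⟩ := A.exists_mem_ne hA e
  obtain ⟨a₁, ha₁, h₁⟩ := A.exists_mem_ne hA b₁
  obtain ⟨a₂, ha₂, b₂, hb₂, h₂, h₁₂, h₁₂'⟩ := (B.erase e).exists_pair_ne_left_ne_right hB h₁
  exact ⟨a₁, ha₁, a₂, mem_of_mem_erase ha₂, c, hcC, b₁, hb₁, b₂, mem_of_mem_erase hb₂, e, heC,
    h₁₂.symm, ne_of_mem_of_not_mem ha₁ hcA, ne_of_mem_of_not_mem (mem_of_mem_erase ha₂) hcB,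
    h₁₂'.symm, hb₁e, ne_of_mem_erase hb₂, h₁, h₂, hec.symm⟩

lemma hasTwoTransversals_or_of_mem {A B C : Finset α} {c : α} (hcC : c ∈ C) (hcA : c ∉ A)
    (hcB : c ∉ B) (hA : 1 < #A) (hB : 1 < #B) (hC : 1 < #C) :
    HasTwoTransversals A B C ∨ (#A = 2 ∧ #B = 2 ∧ C.erase c ⊆ A ∩ B) := by
  by_cases hno : HasTwoTransversals A B C
  · exact Or.inl hno
  have key : ∀ e ∈ C.erase c, (e ∈ A ∧ #A = 2) ∧ (e ∈ B ∧ #B = 2) := by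
    intro e he
    obtain ⟨hec, heC⟩ := mem_erase.mp he
    exact ⟨mem_and_card_eq_two_of_card_erase_le_one hA (not_lt.mp fun h =>
        hno (hasTwoTransversals_of_one_lt_card_erase hcC hcB hcA heC hec hB h).swap),
      mem_and_card_eq_two_of_card_erase_le_one hB (not_lt.mp fun h =>
        hno (hasTwoTransversals_of_one_lt_card_erase hcC hcA hcB heC hec hA h))⟩
  obtain ⟨e, heC, hec⟩ := C.exists_mem_ne hC c
  obtain ⟨⟨-, hA2⟩, ⟨-, hB2⟩⟩ := key e (mem_erase.mpr ⟨hec, heC⟩)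
  exact Or.inr ⟨hA2, hB2, fun e he => mem_inter.mpr ⟨(key e he).1.1, (key e he).2.1⟩⟩

end Transversals

lemma Set.pairwise_ne_of_ncard_eq_three {V : Type*} {x y z : V}
    (h : ({x, y, z} : Set V).ncard = 3) : x ≠ y ∧ x ≠ z ∧ y ≠ z := by
  have h2 (a b : V) : ({a, b} : Set V).ncard ≤ 2 := (Set.ncard_insert_le a {b}).trans (by simp)
  refine ⟨?_, ?_, ?_⟩ <;> rintro rfl <;> simp at h <;>
    exact absurd (h.symm.trans_le (h2 _ _)) (by norm_num)

lemma Function.exists_apply_eq_three {V α : Type*} {x y z : V} (hxy : x ≠ y) (hxz : x ≠ z)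
    (hyz : y ≠ z) (a b c : α) : ∃ f : V → α, f x = a ∧ f y = b ∧ f z = c := by
  classical
  exact ⟨fun t => if t = x then a else if t = y then b else c,
    by simp [hxy.symm, hxz.symm, hyz.symm]⟩

namespace SimpleGraph

variable {V α : Type*} {G H : SimpleGraph V} {S : Set V} {cv : V → α} {ce : Sym2 V → α}
  {t u v x y z : V}

lemma deleteEdges_incidenceSet_union (G : SimpleGraph V) (u v : V) :
    G.deleteEdges (G.incidenceSet u ∪ G.incidenceSet v) =
      (G.deleteIncidenceSet v).deleteIncidenceSet u := by
  ext a b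
  simp only [deleteEdges_adj, deleteIncidenceSet_adj, Set.mem_union, mk'_mem_incidenceSet_iff]
  tauto

lemma deg_le_maxDeg [Fintype V] (G : SimpleGraph V) (t : V) : deg G t ≤ maxDeg G :=
  Finset.le_sup (Finset.mem_univ t)

lemma deg_mono [Finite V] (h : H ≤ G) (t : V) : deg H t ≤ deg G t :=
  Set.ncard_le_ncard (neighborSet_mono h t)

lemma deg_deleteIncidenceSet_add_one [Finite V] (h : G.Adj t u) :
    deg (G.deleteIncidenceSet u) t + 1 = deg G t := by
  have hN : (G.deleteIncidenceSet u).neighborSet t = G.neighborSet t \ {u} := by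
    ext w
    simp [deleteIncidenceSet_adj, h.ne, and_comm]
  rw [deg, hN]
  exact Set.ncard_sdiff_singleton_add_one (s := G.neighborSet t) h

def IsTotalColoringOn (G : SimpleGraph V) (S : Set V) (cv : V → α) (ce : Sym2 V → α) : Prop :=
  (∀ a b, G.Adj a b → a ∈ S → b ∈ S → cv a ≠ cv b) ∧
  (∀ a b w, G.Adj a b → G.Adj a w → b ≠ w → ce s(a, b) ≠ ce s(a, w)) ∧
  (∀ a b, G.Adj a b → a ∈ S → cv a ≠ ce s(a, b))

lemma isNiceColoring_iff {k : ℕ} {cv : V → Fin k} {ce : Sym2 V → Fin k} :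
    IsNiceColoring G k cv ce ↔ G.IsTotalColoringOn {t | 6 ≤ deg G t} cv ce :=
  Iff.rfl

open Classical in
noncomputable def starRecolor (ce : Sym2 V → α) (u : V) (f : V → α) : Sym2 V → α :=
  fun e => if h : u ∈ e then f (Sym2.Mem.other h) else ce e

variable {f : V → α}

@[simp]
lemma starRecolor_mk_left (w : V) : starRecolor ce u f s(u, w) = f w := by
  rw [starRecolor, dif_pos (Sym2.mem_mk_left u w)]
  exact congrArg f (Sym2.congr_right.mp (Sym2.other_spec _))

@[simp]
lemma starRecolor_mk_right (w : V) : starRecolor ce u f s(w, u) = f w := by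
  rw [Sym2.eq_swap, starRecolor_mk_left]

lemma starRecolor_mk_of_ne {a b : V} (ha : a ≠ u) (hb : b ≠ u) :
    starRecolor ce u f s(a, b) = ce s(a, b) := by
  rw [starRecolor,
    dif_neg fun h => (Sym2.mem_iff.mp h).elim (fun h => ha h.symm) fun h => hb h.symm]

open Classical in
noncomputable def missingColors [Fintype α] (G : SimpleGraph V) (S : Set V) (cv : V → α)
    (ce : Sym2 V → α) (t : V) : Finset α :=
  Finset.univ.filter fun c => (t ∈ S → cv t ≠ c) ∧ ∀ w, G.Adj t w → ce s(t, w) ≠ c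

variable [Fintype α] {c : α}

@[simp]
lemma mem_missingColors :
    c ∈ G.missingColors S cv ce t ↔ (t ∈ S → cv t ≠ c) ∧ ∀ w, G.Adj t w → ce s(t, w) ≠ c := by
  simp [missingColors]

/-- All colours missing at `t`; the paper's `C_t` is a two-element subset of it. -/
noncomputable abbrev niceMissingColors (G : SimpleGraph V) (cv : V → α) (ce : Sym2 V → α)
    (t : V) : Finset α :=
  G.missingColors {t | 6 ≤ deg G t} cv ce t

lemma missingAt_iff {k : ℕ} {cv : V → Fin k} {ce : Sym2 V → Fin k} {c : Fin k} :
    MissingAt G cv ce t c ↔ c ∈ G.niceMissingColors cv ce t := by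
  simp [MissingAt]

lemma card_le_card_missingColors_add_deg [Finite V] :
    Fintype.card α ≤ #(G.missingColors S cv ce t) + deg G t + 1 := by
  have hcover : (Set.univ : Set α) ⊆
      ↑(G.missingColors S cv ce t) ∪ ((fun w => ce s(t, w)) '' G.neighborSet t ∪ {cv t}) := by
    intro c _
    by_contra h
    simp only [Set.mem_union, Finset.mem_coe, mem_missingColors, Set.mem_image,
      mem_neighborSet, Set.mem_singleton_iff, not_or, not_and] at h
    exact h.1 (fun _ hc => h.2.2 hc.symm) fun w hw hc => h.2.1 ⟨w, hw, hc⟩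
  calc Fintype.card α = (Set.univ : Set α).ncard := by simp
    _ ≤ #(G.missingColors S cv ce t) + ((fun w => ce s(t, w)) '' G.neighborSet t).ncard + 1 := by
      refine (Set.ncard_le_ncard hcover).trans ((Set.ncard_union_le _ _).trans ?_)
      rw [Set.ncard_coe_finset, add_assoc]
      grw [Set.ncard_union_le, Set.ncard_singleton]
    _ ≤ #(G.missingColors S cv ce t) + deg G t + 1 := by
      gcongr
      exact Set.ncard_image_le (Set.toFinite _)

lemma missingColors_subset_of_eqOn {S' : Set V} {cv' : V → α} (hS : S ⊆ S')
    (h : Set.EqOn cv' cv S) : G.missingColors S' cv' ce t ⊆ G.missingColors S cv ce t := by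
  intro c hc
  rw [mem_missingColors] at hc ⊢
  exact ⟨fun ht => h ht ▸ hc.1 (hS ht), hc.2⟩

lemma missingColors_eq_of_eqOn_of_mem {S' : Set V} {cv' : V → α} (hS : S ⊆ S')
    (h : Set.EqOn cv' cv S) (ht : t ∈ S) :
    G.missingColors S' cv' ce t = G.missingColors S cv ce t := by
  refine (missingColors_subset_of_eqOn hS h).antisymm fun c hc => ?_
  rw [mem_missingColors] at hc ⊢
  exact ⟨fun _ => (h ht).symm ▸ hc.1 ht, hc.2⟩

section VertexExtension

variable [DecidableEq V] [Finite V]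

/-- A vertex of degree `d` sees at most `2 d` colours, so it can be coloured when `2 d < |α|`. -/
lemma IsTotalColoringOn.exists_update_vertex (h : G.IsTotalColoringOn S cv ce)
    (ht : 2 * deg G t < Fintype.card α) :
    ∃ c, G.IsTotalColoringOn (insert t S) (Function.update cv t c) ce := by
  obtain ⟨c, hc⟩ : ∃ c, c ∉ (fun w => ce s(t, w)) '' G.neighborSet t ∪ cv '' G.neighborSet t := by
    refine (Set.ne_univ_iff_exists_notMem _).mp fun huniv => ?_
    have hcard : ((fun w => ce s(t, w)) '' G.neighborSet t ∪ cv '' G.neighborSet t).ncard ≤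
        deg G t + deg G t := (Set.ncard_union_le _ _).trans
      (add_le_add (Set.ncard_image_le (Set.toFinite _)) (Set.ncard_image_le (Set.toFinite _)))
    rw [huniv, Set.ncard_univ, Nat.card_eq_fintype_card] at hcard
    omega
  simp only [Set.mem_union, Set.mem_image, mem_neighborSet, not_or, not_exists, not_and] at hc
  refine ⟨c, fun a b hab ha hb => ?_, h.2.1, fun a b hab ha => ?_⟩
  · rcases eq_or_ne a t with rfl | hat
    · rw [Function.update_self, Function.update_of_ne hab.ne']
      exact fun hcb => hc.2 b hab hcb.symm
    rcases eq_or_ne b t with rfl | hbt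
    · rw [Function.update_self, Function.update_of_ne hat]
      exact hc.2 a hab.symm
    rw [Function.update_of_ne hat, Function.update_of_ne hbt]
    exact h.1 a b hab (ha.resolve_left hat) (hb.resolve_left hbt)
  · rcases eq_or_ne a t with rfl | hat
    · rw [Function.update_self]
      exact fun hcb => hc.1 b hab hcb.symm
    rw [Function.update_of_ne hat]
    exact h.2.2 a b hab (ha.resolve_left hat)

lemma IsTotalColoringOn.exists_extend {S' : Set V} (h : G.IsTotalColoringOn S cv ce)
    (hS : S ⊆ S') (hdeg : ∀ t ∈ S' \ S, 2 * deg G t < Fintype.card α) :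
    ∃ cv', G.IsTotalColoringOn S' cv' ce ∧ Set.EqOn cv' cv S := by
  rw [← Set.union_sdiff_cancel hS]
  refine Set.Finite.induction_on_subset (S' \ S) (Set.toFinite _)
    ⟨cv, by simpa using h, fun _ _ => rfl⟩ ?_
  rintro t T htS' - htT ⟨cv', hcv', hagree⟩
  obtain ⟨c, hc⟩ := hcv'.exists_update_vertex (hdeg t htS')
  refine ⟨Function.update cv' t c, by rwa [Set.union_insert], fun w hw => ?_⟩
  rw [Function.update_of_ne (ne_of_mem_of_not_mem hw htS'.2), hagree hw]

end VertexExtension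

section EdgeRecolouring

variable [DecidableEq (Sym2 V)] {e : Sym2 V}

lemma IsTotalColoringOn.update_edge (h : G.IsTotalColoringOn S cv ce)
    (hc : ∀ t ∈ e, c ∈ G.missingColors S cv ce t) :
    G.IsTotalColoringOn S cv (Function.update ce e c) := by
  refine ⟨h.1, fun a b w hab haw hbw => ?_, fun a b hab ha => ?_⟩
  · by_cases hb : s(a, b) = e <;> by_cases hw : s(a, w) = e
    · exact absurd (Sym2.congr_right.mp (hb.trans hw.symm)) hbw
    · rw [Function.update_of_ne hw, hb, Function.update_self]
      exact fun h => ((mem_missingColors.mp (hc a (hb ▸ Sym2.mem_mk_left a b))).2 w haw h.symm)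
    · rw [Function.update_of_ne hb, hw, Function.update_self]
      exact (mem_missingColors.mp (hc a (hw ▸ Sym2.mem_mk_left a w))).2 b hab
    · rw [Function.update_of_ne hb, Function.update_of_ne hw]
      exact h.2.1 a b w hab haw hbw
  · by_cases hb : s(a, b) = e
    · rw [hb, Function.update_self]
      exact (mem_missingColors.mp (hc a (hb ▸ Sym2.mem_mk_left a b))).1 ha
    · rw [Function.update_of_ne hb]
      exact h.2.2 a b hab ha

lemma missingColors_update_of_notMem (ht : t ∉ e) :
    G.missingColors S cv (Function.update ce e c) t = G.missingColors S cv ce t := by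
  ext c'
  simp only [mem_missingColors]
  refine and_congr_right fun _ => forall_congr' fun w => imp_congr_right fun _ => ?_
  rw [Function.update_of_ne fun h : s(t, w) = e => ht (h ▸ Sym2.mem_mk_left t w)]

lemma IsTotalColoringOn.missingColors_update [DecidableEq α] {w : V}
    (h : G.IsTotalColoringOn S cv ce)
    (hte : s(t, w) = e) (htw : G.Adj t w) (hc : c ∈ G.missingColors S cv ce t) :
    G.missingColors S cv (Function.update ce e c) t =
      insert (ce e) ((G.missingColors S cv ce t).erase c) := by
  subst hte
  rw [mem_missingColors] at hc
  ext c'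
  simp only [mem_missingColors, Finset.mem_insert, Finset.mem_erase]
  constructor
  · rintro ⟨hv, he⟩
    refine or_iff_not_imp_left.mpr fun hc' => ⟨?_, hv, fun w' htw' => ?_⟩
    · rintro rfl
      exact he w htw (Function.update_self _ _ _)
    · by_cases hw : w' = w
      · exact hw ▸ Ne.symm hc'
      · simpa [Function.update_of_ne (Sym2.congr_right.not.mpr hw)] using he w' htw'
  · rintro (rfl | ⟨hc', hv, he⟩)
    · refine ⟨h.2.2 t w htw, fun w' htw' => ?_⟩
      by_cases hw : w' = w
      · rw [hw, Function.update_self]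
        exact Ne.symm (hc.2 w htw)
      · rw [Function.update_of_ne (Sym2.congr_right.not.mpr hw)]
        exact h.2.1 t w' w htw' htw hw
    · refine ⟨hv, fun w' htw' => ?_⟩
      by_cases hw : w' = w
      · rw [hw, Function.update_self]
        exact Ne.symm hc'
      · rw [Function.update_of_ne (Sym2.congr_right.not.mpr hw)]
        exact he w' htw'

end EdgeRecolouring

lemma IsTotalColoringOn.of_deleteIncidenceSet
    (h : (G.deleteIncidenceSet u).IsTotalColoringOn S cv ce) (hu : u ∉ S)
    (hf : Set.InjOn f (G.neighborSet u))
    (hmiss : ∀ w, G.Adj u w → f w ∈ (G.deleteIncidenceSet u).missingColors S cv ce w) :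
    G.IsTotalColoringOn S cv (starRecolor ce u f) := by
  have hadj {a b : V} (hab : G.Adj a b) (ha : a ≠ u) (hb : b ≠ u) :
      (G.deleteIncidenceSet u).Adj a b :=
    deleteIncidenceSet_adj.mpr ⟨hab, ha, hb⟩
  refine ⟨fun a b hab ha hb => h.1 a b (hadj hab (ne_of_mem_of_not_mem ha hu)
    (ne_of_mem_of_not_mem hb hu)) ha hb, fun a b w hab haw hbw => ?_, fun a b hab ha => ?_⟩
  · rcases eq_or_ne a u with rfl | hau
    · rw [starRecolor_mk_left, starRecolor_mk_left]
      exact fun hbw' => hbw (hf hab haw hbw')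
    rcases eq_or_ne b u with rfl | hbu
    · have hwu : w ≠ b := Ne.symm hbw
      rw [starRecolor_mk_right, starRecolor_mk_of_ne hau hwu]
      exact fun hc => (mem_missingColors.mp (hmiss a hab.symm)).2 w (hadj haw hau hwu) hc.symm
    rcases eq_or_ne w u with rfl | hwu
    · rw [starRecolor_mk_right, starRecolor_mk_of_ne hau hbu]
      exact (mem_missingColors.mp (hmiss a haw.symm)).2 b (hadj hab hau hbu)
    rw [starRecolor_mk_of_ne hau hbu, starRecolor_mk_of_ne hau hwu]
    exact h.2.1 a b w (hadj hab hau hbu) (hadj haw hau hwu) hbw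
  · have hau := ne_of_mem_of_not_mem ha hu
    rcases eq_or_ne b u with rfl | hbu
    · rw [starRecolor_mk_right]
      exact (mem_missingColors.mp (hmiss a hab.symm)).1 ha
    rw [starRecolor_mk_of_ne hau hbu]
    exact h.2.2 a b (hadj hab hau hbu) ha

lemma mem_missingColors_starRecolor
    (hc : c ∈ (G.deleteIncidenceSet u).missingColors S cv ce t) (htu : t ≠ u)
    (hft : G.Adj u t → f t ≠ c) : c ∈ G.missingColors S cv (starRecolor ce u f) t := by
  refine mem_missingColors.mpr ⟨(mem_missingColors.mp hc).1, fun w htw => ?_⟩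
  rcases eq_or_ne w u with rfl | hwu
  · rw [starRecolor_mk_right]
    exact hft htw.symm
  rw [starRecolor_mk_of_ne htu hwu]
  exact (mem_missingColors.mp hc).2 w (deleteIncidenceSet_adj.mpr ⟨htw, htu, hwu⟩)

lemma IsTotalColoringOn.exists_of_hasTwoTransversals (hxy : x ≠ y) (hxz : x ≠ z) (hyz : y ≠ z)
    (hNu : G.neighborSet u = {x, y, z}) (hNv : G.neighborSet v = {x, y, z}) (hu : u ∉ S)
    (hv : v ∉ S) (h : ((G.deleteIncidenceSet v).deleteIncidenceSet u).IsTotalColoringOn S cv ce)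
    (hT : HasTwoTransversals
      (((G.deleteIncidenceSet v).deleteIncidenceSet u).missingColors S cv ce x)
      (((G.deleteIncidenceSet v).deleteIncidenceSet u).missingColors S cv ce y)
      (((G.deleteIncidenceSet v).deleteIncidenceSet u).missingColors S cv ce z)) :
    ∃ ce', G.IsTotalColoringOn S cv ce' := by
  obtain ⟨a₁, ha₁, a₂, ha₂, a₃, ha₃, b₁, hb₁, b₂, hb₂, b₃, hb₃, h₁₂, h₁₃, h₂₃, h₁₂', h₁₃', h₂₃',
    h₁, h₂, h₃⟩ := hT
  obtain ⟨f, hfx, hfy, hfz⟩ := Function.exists_apply_eq_three hxy hxz hyz a₁ a₂ a₃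
  obtain ⟨g, hgx, hgy, hgz⟩ := Function.exists_apply_eq_three hxy hxz hyz b₁ b₂ b₃
  have hNu' {w : V} (hw : G.Adj u w) : w = x ∨ w = y ∨ w = z := by
    simpa [← mem_neighborSet, hNu] using hw
  have hNv' {w : V} (hw : G.Adj v w) : w = x ∨ w = y ∨ w = z := by
    simpa [← mem_neighborSet, hNv] using hw
  have hu' : (G.deleteIncidenceSet v).IsTotalColoringOn S cv (starRecolor ce u f) := by
    refine h.of_deleteIncidenceSet hu ?_ fun w hw => ?_
    · refine Set.InjOn.mono (neighborSet_mono (deleteIncidenceSet_le G v) u) ?_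
      rw [hNu]
      simp [Set.injOn_insert, hxy, hxz, hyz, hfx, hfy, hfz, h₁₂.symm, h₁₃.symm, h₂₃]
    · rcases hNu' (deleteIncidenceSet_le G v hw) with rfl | rfl | rfl
      · rwa [hfx]
      · rwa [hfy]
      · rwa [hfz]
  refine ⟨starRecolor (starRecolor ce u f) v g, hu'.of_deleteIncidenceSet hv ?_ fun w hw => ?_⟩
  · rw [hNv]
    simp [Set.injOn_insert, hxy, hxz, hyz, hgx, hgy, hgz, h₁₂'.symm, h₁₃'.symm, h₂₃']
  · have hwu : w ≠ u := (show G.Adj u w by rw [← mem_neighborSet, hNu, ← hNv]; exact hw).ne'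
    rcases hNv' hw with rfl | rfl | rfl
    · exact mem_missingColors_starRecolor (by rwa [hgx]) hwu fun _ => by rwa [hfx, hgx]
    · exact mem_missingColors_starRecolor (by rwa [hgy]) hwu fun _ => by rwa [hfy, hgy]
    · exact mem_missingColors_starRecolor (by rwa [hgz]) hwu fun _ => by rwa [hfz, hgz]

section MinimalCounterexample

variable [Fintype V] {k : ℕ}

lemma card_niceMissingColors_eq_two_of_not_hasNiceColoring (hk : 11 ≤ k)
    (hΔ : maxDeg G ≤ k - 1) (hG : ¬ HasNiceColoring G k) (huv : u ≠ v) (hu3 : deg G u = 3)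
    (hv3 : deg G v = 3) (hNu : G.neighborSet u = {x, y, z}) (hNv : G.neighborSet v = {x, y, z})
    (hH : H = (G.deleteIncidenceSet v).deleteIncidenceSet u) {cv : V → Fin k}
    {ce : Sym2 V → Fin k} (hφ : IsNiceColoring H k cv ce) {c : Fin k}
    (hcz : c ∈ H.niceMissingColors cv ce z) (hcx : c ∉ H.niceMissingColors cv ce x)
    (hcy : c ∉ H.niceMissingColors cv ce y) :
    #(H.niceMissingColors cv ce x) = 2 ∧ #(H.niceMissingColors cv ce y) = 2 ∧
      (H.niceMissingColors cv ce z).erase c ⊆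
        H.niceMissingColors cv ce x ∩ H.niceMissingColors cv ce y := by
  classical
  obtain ⟨hxy, hxz, hyz⟩ := Set.pairwise_ne_of_ncard_eq_three (by rw [← hNu]; exact hu3)
  have hHG : H ≤ G := hH ▸ (deleteIncidenceSet_le _ u).trans (deleteIncidenceSet_le G v)
  have hS : {t | 6 ≤ deg H t} ⊆ {t | 6 ≤ deg G t} := fun t ht => le_trans ht (deg_mono hHG t)
  obtain ⟨cv', hcv', hagree⟩ := (isNiceColoring_iff.mp hφ).exists_extend hS
    (fun t ht => by simp only [Set.mem_sdiff, Set.mem_ofPred_eq] at ht; simp; omega)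
  set M : V → Finset (Fin k) := H.missingColors {t | 6 ≤ deg G t} cv' ce
  have hT : ¬ HasTwoTransversals (M x) (M y) (M z) := by
    subst hH
    rintro hT
    obtain ⟨ce', hce'⟩ := hcv'.exists_of_hasTwoTransversals hxy hxz hyz hNu hNv (by simp [hu3])
      (by simp [hv3]) hT
    exact hG ⟨cv', ce', hce'⟩
  have hcard (t : V) : k ≤ #(M t) + deg H t + 1 := by
    have := card_le_card_missingColors_add_deg (G := H) (S := {t | 6 ≤ deg G t}) (cv := cv')
      (ce := ce) (t := t)
    rwa [Fintype.card_fin] at this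
  have hM2 {t : V} (ht : t ∈ ({x, y, z} : Set V)) : 1 < #(M t) := by
    have hut : G.Adj u t := by rwa [← mem_neighborSet, hNu]
    have hvt : G.Adj v t := by rwa [← mem_neighborSet, hNv]
    have hdegv := deg_deleteIncidenceSet_add_one hvt.symm
    have hdegu := deg_deleteIncidenceSet_add_one (G := G.deleteIncidenceSet v)
      (deleteIncidenceSet_adj.mpr ⟨hut.symm, hvt.ne', huv⟩)
    rw [← hH] at hdegu
    have := hcard t
    have := deg_le_maxDeg G t
    omega
  have hM5 {t : V} (ht : ¬ 6 ≤ deg H t) : 4 < #(M t) := by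
    have := hcard t
    omega
  have hsub (t : V) : M t ⊆ H.niceMissingColors cv ce t := missingColors_subset_of_eqOn hS hagree
  have heq {t : V} (ht : 6 ≤ deg H t) : M t = H.niceMissingColors cv ce t :=
    missingColors_eq_of_eqOn_of_mem hS hagree ht
  have hz : 6 ≤ deg H z := by
    by_contra hz
    exact hT (hasTwoTransversals_of_three_lt_card (hM2 (by simp)) (hM2 (by simp))
      (by have := hM5 hz; omega))
  rcases hasTwoTransversals_or_of_mem (heq hz ▸ hcz) (fun h => hcx (hsub x h))
    (fun h => hcy (hsub y h)) (hM2 (by simp)) (hM2 (by simp)) (hM2 (by simp)) with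
    hT' | ⟨hx2, hy2, hzxy⟩
  · exact absurd hT' hT
  have hx : 6 ≤ deg H x := by_contra fun h => by have := hM5 h; omega
  have hy : 6 ≤ deg H y := by_contra fun h => by have := hM5 h; omega
  rw [heq hx, heq hy, heq hz] at hzxy
  exact ⟨heq hx ▸ hx2, heq hy ▸ hy2, hzxy⟩

/-- Recolour `xy` with `c` and apply the previous lemma to `c`, which is then missing at `z`
only. -/
lemma card_niceMissingColors_eq_two_of_mem_inter (hk : 11 ≤ k) (hΔ : maxDeg G ≤ k - 1)
    (hG : ¬ HasNiceColoring G k) (huv : u ≠ v) (hu3 : deg G u = 3) (hv3 : deg G v = 3)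
    (hNu : G.neighborSet u = {x, y, z}) (hNv : G.neighborSet v = {x, y, z}) (hxy : G.Adj x y)
    (hH : H = (G.deleteIncidenceSet v).deleteIncidenceSet u) {cv : V → Fin k}
    {ce : Sym2 V → Fin k} (hφ : IsNiceColoring H k cv ce) {c : Fin k}
    (hcx : c ∈ H.niceMissingColors cv ce x) (hcy : c ∈ H.niceMissingColors cv ce y)
    (hcz : c ∈ H.niceMissingColors cv ce z) :
    #(H.niceMissingColors cv ce x) = 2 ∧ #(H.niceMissingColors cv ce y) = 2 ∧
      (H.niceMissingColors cv ce z).erase c ⊆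
        insert (ce s(x, y)) (H.niceMissingColors cv ce x ∩ H.niceMissingColors cv ce y) := by
  classical
  obtain ⟨-, hxz, hyz⟩ := Set.pairwise_ne_of_ncard_eq_three (by rw [← hNu]; exact hu3)
  have hN {w : V} (hw : w ∈ ({x, y, z} : Set V)) : w ≠ u ∧ w ≠ v :=
    ⟨(show G.Adj u w by rwa [← mem_neighborSet, hNu]).ne',
      (show G.Adj v w by rwa [← mem_neighborSet, hNv]).ne'⟩
  have hHxy : H.Adj x y := by
    rw [hH, deleteIncidenceSet_adj, deleteIncidenceSet_adj]
    exact ⟨⟨hxy, (hN (by simp)).2, (hN (by simp)).2⟩, (hN (by simp)).1, (hN (by simp)).1⟩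
  have hφ' := isNiceColoring_iff.mp hφ
  have hz : z ∉ s(x, y) := fun hz =>
    (Sym2.mem_iff.mp hz).elim (fun h => hxz h.symm) fun h => hyz h.symm
  have hMx := hφ'.missingColors_update rfl hHxy hcx
  have hMy := hφ'.missingColors_update Sym2.eq_swap hHxy.symm hcy
  have hex : ce s(x, y) ∉ H.niceMissingColors cv ce x :=
    fun h => (mem_missingColors.mp h).2 y hHxy rfl
  have hey : ce s(x, y) ∉ H.niceMissingColors cv ce y :=
    fun h => (mem_missingColors.mp h).2 x hHxy.symm (congrArg ce Sym2.eq_swap)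
  have hce : ce s(x, y) ≠ c := fun h => hex (h ▸ hcx)
  have hψ : H.IsTotalColoringOn {t | 6 ≤ deg H t} cv (Function.update ce s(x, y) c) :=
    hφ'.update_edge fun t ht => by
      rcases Sym2.mem_iff.mp ht with rfl | rfl
      exacts [hcx, hcy]
  obtain ⟨hx2, hy2, hzxy⟩ := card_niceMissingColors_eq_two_of_not_hasNiceColoring hk hΔ hG huv
    hu3 hv3 hNu hNv hH hψ (c := c)
    (by rwa [niceMissingColors, missingColors_update_of_notMem hz])
    (by simp [hMx, hce.symm]) (by simp [hMy, hce.symm])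
  simp only [niceMissingColors, hMx, hMy, missingColors_update_of_notMem hz] at hx2 hy2 hzxy
  rw [card_insert_of_notMem (fun h => hex (mem_of_mem_erase h)), card_erase_of_mem hcx] at hx2
  rw [card_insert_of_notMem (fun h => hey (mem_of_mem_erase h)), card_erase_of_mem hcy] at hy2
  refine ⟨by have := card_pos.mpr ⟨c, hcx⟩; omega, by have := card_pos.mpr ⟨c, hcy⟩; omega,
    fun e he => ?_⟩
  have := hzxy he
  simp only [mem_inter, mem_insert, mem_erase] at this ⊢
  tauto

end MinimalCounterexample

end SimpleGraph

theorem missing_colors_claim2ii_general {V : Type*} [Fintype V] (G : SimpleGraph V) (k : ℕ)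
    (hk : 11 ≤ k) (hΔ : maxDeg G ≤ k - 1)
    (hG : ¬ HasNiceColoring G k)
    (u v x y z : V) (huv : u ≠ v)
    (hu3 : deg G u = 3) (hv3 : deg G v = 3)
    (hNu : G.neighborSet u = {x, y, z}) (hNv : G.neighborSet v = {x, y, z})
    (hxy : G.Adj x y)
    (cv : V → Fin k) (ce : Sym2 V → Fin k)
    (hψ : IsNiceColoring (G.deleteEdges (G.incidenceSet u ∪ G.incidenceSet v)) k cv ce)
    (Cx Cy Cz : Finset (Fin k))
    (hCy : Cy.card = 2) (hCz : Cz.card = 2)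
    (hmx : ∀ c ∈ Cx,
      MissingAt (G.deleteEdges (G.incidenceSet u ∪ G.incidenceSet v)) cv ce x c)
    (hmy : ∀ c ∈ Cy,
      MissingAt (G.deleteEdges (G.incidenceSet u ∪ G.incidenceSet v)) cv ce y c)
    (hmz : ∀ c ∈ Cz,
      MissingAt (G.deleteEdges (G.incidenceSet u ∪ G.incidenceSet v)) cv ce z c)
    (c₁ c₂ c₃ : Fin k) (h12 : c₁ ≠ c₂)
    (hCxEq : Cx = {c₁, c₂}) (hc3 : ce s(x, y) = c₃)
    (hc1 : c₁ ∈ Cx ∩ Cy ∩ Cz) :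
    Cz = {c₁, c₃} ∨ (Cy = {c₁, c₂} ∧ Cz = {c₁, c₂}) := by
  simp only [missingAt_iff] at hmx hmy hmz
  simp only [Finset.mem_inter] at hc1
  obtain ⟨⟨hc1x, hc1y⟩, hc1z⟩ := hc1
  obtain ⟨hx2, hy2, hz⟩ := card_niceMissingColors_eq_two_of_mem_inter hk hΔ hG huv hu3 hv3
    hNu hNv hxy (deleteEdges_incidenceSet_union G u v) hψ (hmx c₁ hc1x) (hmy c₁ hc1y)
    (hmz c₁ hc1z)
  have hFx := (Finset.eq_of_subset_of_card_le (hCxEq ▸ hmx) (by rw [hx2, card_pair h12])).symm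
  have hFy := Finset.eq_of_subset_of_card_le hmy (by rw [hy2, hCy])
  obtain ⟨e, he1, rfl⟩ := Finset.exists_eq_pair_of_card_eq_two hCz hc1z
  have he := hz (Finset.mem_erase.mpr ⟨he1, hmz e (by simp)⟩)
  rw [hc3, hFx, ← hFy] at he
  simp only [Finset.mem_insert, Finset.mem_inter, Finset.mem_singleton] at he
  rcases he with rfl | ⟨rfl | rfl, he⟩
  · exact Or.inl rfl
  · exact absurd rfl he1
  · exact Or.inr ⟨Finset.eq_pair_of_card_eq_two hCy hc1y he h12, rfl⟩

/-- Claim 2(ii): with `G` minimal without a nice `k`-coloring, `u`, `v` two `3`-vertices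
with common neighborhood `{x, y, z}`, `xy ∈ E(G)`, `ψ = (cv, ce)` a nice coloring of
`G - {u, v}`, `Cx = {c₁, c₂}`, `ce(xy) = c₃` and `c₁ ∈ Cx ∩ Cy ∩ Cz`: then either
`Cz = {c₁, c₃}` or `Cx = Cy = Cz = {c₁, c₂}`. -/
theorem missing_colors_claim2ii {V : Type*} [Fintype V] (G : SimpleGraph V) (k : ℕ)
    (hk : 11 ≤ k) (hΔ : maxDeg G ≤ k - 1)
    (hG : ¬ HasNiceColoring G k)
    (hmin : ∀ H : SimpleGraph V, H < G → HasNiceColoring H k)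
    (u v x y z : V) (huv : u ≠ v)
    (hu3 : deg G u = 3) (hv3 : deg G v = 3)
    (hNu : G.neighborSet u = {x, y, z}) (hNv : G.neighborSet v = {x, y, z})
    (hxy : G.Adj x y)
    (cv : V → Fin k) (ce : Sym2 V → Fin k)
    (hψ : IsNiceColoring (G.deleteEdges (G.incidenceSet u ∪ G.incidenceSet v)) k cv ce)
    (Cx Cy Cz : Finset (Fin k))
    (hCy : Cy.card = 2) (hCz : Cz.card = 2)
    (hmx : ∀ c ∈ Cx,
      MissingAt (G.deleteEdges (G.incidenceSet u ∪ G.incidenceSet v)) cv ce x c)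
    (hmy : ∀ c ∈ Cy,
      MissingAt (G.deleteEdges (G.incidenceSet u ∪ G.incidenceSet v)) cv ce y c)
    (hmz : ∀ c ∈ Cz,
      MissingAt (G.deleteEdges (G.incidenceSet u ∪ G.incidenceSet v)) cv ce z c)
    (c₁ c₂ c₃ : Fin k) (h12 : c₁ ≠ c₂)
    (hCxEq : Cx = {c₁, c₂}) (hc3 : ce s(x, y) = c₃)
    (hc1 : c₁ ∈ Cx ∩ Cy ∩ Cz) :
    Cz = {c₁, c₃} ∨ (Cy = {c₁, c₂} ∧ Cz = {c₁, c₂}) :=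
  missing_colors_claim2ii_general G k hk hΔ hG u v x y z huv hu3 hv3 hNu hNv hxy cv ce hψ Cx Cy Cz
    hCy hCz hmx hmy hmz c₁ c₂ c₃ h12 hCxEq hc3 hc1
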